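/- arXiv:1410.6556 — 3 statements merged into one kernel-verified Lean document; each statement's English description precedes it below -/
import Mathlib

section
/- Let Y ∈ ℝⁿ, W₁ ∈ ℝ^{n×q}, W₂ ∈ ℝ^{n×L}, and W = [W₁ W₂]. Assume WᵀW, W₁ᵀW₁ and W̃₂ᵀW̃₂ are invertible and that σ̂²(W) > 0, and let γ̂₂ = (W̃₂ᵀW̃₂)⁻¹W̃₂ᵀỸ. Then σ̂²(W₁)/σ̂²(W) ≥ 1 + (n⁻¹YᵀY)⁻¹ · γ̂₂ᵀ(n⁻¹W̃₂ᵀW̃₂)γ̂₂ (inequality (e507) used in the proof of Theorem 2(i)). -/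
/-!
Write `σ̂²(W) = n⁻¹ Yᵀ(I − H_W)Y` with the hat matrix `H_W = W(WᵀW)⁻¹Wᵀ`. Right-multiplying
`[W₁ W₂]` by a block unitriangular matrix turns it into `[W₁ W̃₂]` with `W₁ᵀW̃₂ = 0` without
changing the hat matrix (Frisch–Waugh–Lovell), so `H_W = H_{W₁} + H_{W̃₂}` and
`σ̂²(W₁) = σ̂²(W) + n⁻¹ YᵀH_{W̃₂}Y`. Since `W̃₂ᵀỸ = W̃₂ᵀY`, the last term is
`n⁻¹ γ̂₂ᵀW̃₂ᵀW̃₂γ̂₂`, and dividing by `σ̂²(W) ≤ n⁻¹YᵀY` (hat matrices are positive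
semidefinite) gives the bound.
-/

open Matrix

/-- Variance estimate from OLS with design `W`. -/
noncomputable def sigmaHat {n : ℕ} {d : Type*} [Fintype d] [DecidableEq d]
    (Y : Fin n → ℝ) (W : Matrix (Fin n) d ℝ) : ℝ :=
  (1 / (n : ℝ)) * (Y ⬝ᵥ Y - Y ⬝ᵥ ((W * (Wᵀ * W)⁻¹ * Wᵀ) *ᵥ Y))

section HatMatrix

variable {R : Type*} [CommRing R] {m d e : Type*} [Fintype m] [Fintype d] [DecidableEq d]

noncomputable def hatMatrix (W : Matrix m d R) : Matrix m m R :=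
  W * (Wᵀ * W)⁻¹ * Wᵀ

lemma hatMatrix_mul_of_isUnit (W : Matrix m d R) {T : Matrix d d R} (hT : IsUnit T) :
    hatMatrix (W * T) = hatMatrix W := by
  have hTdet : IsUnit T.det := (isUnit_iff_isUnit_det T).1 hT
  have hTtdet : IsUnit Tᵀ.det := by rwa [det_transpose]
  unfold hatMatrix
  rw [transpose_mul, show Tᵀ * Wᵀ * (W * T) = Tᵀ * (Wᵀ * W) * T by
      simp only [Matrix.mul_assoc], Matrix.mul_inv_rev, Matrix.mul_inv_rev]
  simp only [Matrix.mul_assoc, mul_nonsing_inv_cancel_left _ _ hTdet,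
    nonsing_inv_mul_cancel_left _ _ hTtdet]

lemma transpose_mul_hatMatrix {W : Matrix m d R} (hW : IsUnit (Wᵀ * W)) :
    Wᵀ * hatMatrix W = Wᵀ := by
  unfold hatMatrix
  rw [← Matrix.mul_assoc, ← Matrix.mul_assoc,
    mul_nonsing_inv _ ((isUnit_iff_isUnit_det _).1 hW), Matrix.one_mul]

lemma transpose_mul_sub_hatMatrix_mul {W₁ : Matrix m d R} (h₁ : IsUnit (W₁ᵀ * W₁))
    (W₂ : Matrix m e R) : W₁ᵀ * (W₂ - hatMatrix W₁ * W₂) = 0 := by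
  rw [Matrix.mul_sub, ← Matrix.mul_assoc, transpose_mul_hatMatrix h₁, sub_self]

lemma hatMatrix_fromCols_of_transpose_mul_eq_zero [Fintype e] [DecidableEq e]
    {A : Matrix m d R} {B : Matrix m e R}
    (hA : IsUnit (Aᵀ * A)) (hB : IsUnit (Bᵀ * B)) (hAB : Aᵀ * B = 0) :
    hatMatrix (fromCols A B) = hatMatrix A + hatMatrix B := by
  have hBA : Bᵀ * A = 0 := by rw [← transpose_eq_zero, transpose_mul, transpose_transpose, hAB]
  unfold hatMatrix
  rw [transpose_fromCols, fromRows_mul_fromCols, hAB, hBA,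
    inv_fromBlocks_zero₂₁_of_isUnit_iff _ _ _ (iff_of_true hA hB),
    fromCols_mul_fromBlocks, fromCols_mul_fromRows]
  simp

lemma fromCols_mul_fromBlocks_eq_fromCols_residual [Fintype e] [DecidableEq e]
    (W₁ : Matrix m d R) (W₂ : Matrix m e R) :
    fromCols W₁ W₂ *
        (fromBlocks 1 (-((W₁ᵀ * W₁)⁻¹ * W₁ᵀ * W₂)) 0 1 : Matrix (d ⊕ e) (d ⊕ e) R) =
      fromCols W₁ (W₂ - hatMatrix W₁ * W₂) := by
  rw [fromCols_mul_fromBlocks]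
  simp only [hatMatrix, Matrix.mul_one, Matrix.mul_zero, add_zero, Matrix.mul_neg,
    Matrix.mul_assoc]
  abel_nf

theorem hatMatrix_fromCols_eq_add_hatMatrix_residual [Fintype e] [DecidableEq e]
    {W₁ : Matrix m d R} {W₂ : Matrix m e R}
    (h₁ : IsUnit (W₁ᵀ * W₁))
    (h₂ : IsUnit ((W₂ - hatMatrix W₁ * W₂)ᵀ * (W₂ - hatMatrix W₁ * W₂))) :
    hatMatrix (fromCols W₁ W₂) = hatMatrix W₁ + hatMatrix (W₂ - hatMatrix W₁ * W₂) := by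
  have hT : IsUnit
      (fromBlocks 1 (-((W₁ᵀ * W₁)⁻¹ * W₁ᵀ * W₂)) 0 1 : Matrix (d ⊕ e) (d ⊕ e) R) :=
    isUnit_fromBlocks_zero₂₁.2 ⟨isUnit_one, isUnit_one⟩
  rw [← hatMatrix_mul_of_isUnit _ hT, fromCols_mul_fromBlocks_eq_fromCols_residual,
    hatMatrix_fromCols_of_transpose_mul_eq_zero h₁ h₂ (transpose_mul_sub_hatMatrix_mul h₁ W₂)]

lemma transpose_mulVec_sub_hatMatrix_mulVec {W : Matrix m d R} {X : Matrix m e R}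
    (hWX : Wᵀ * X = 0) (y : m → R) :
    Xᵀ *ᵥ (y - hatMatrix W *ᵥ y) = Xᵀ *ᵥ y := by
  have hXW : Xᵀ * W = 0 := by rw [← transpose_eq_zero, transpose_mul, transpose_transpose, hWX]
  rw [mulVec_sub, mulVec_mulVec, hatMatrix, ← Matrix.mul_assoc, ← Matrix.mul_assoc, hXW]
  simp

lemma dotProduct_gram_mulVec_eq_dotProduct_hatMatrix_mulVec {X : Matrix m d R}
    (hX : IsUnit (Xᵀ * X)) (y : m → R) :
    ((Xᵀ * X)⁻¹ *ᵥ (Xᵀ *ᵥ y)) ⬝ᵥ ((Xᵀ * X) *ᵥ ((Xᵀ * X)⁻¹ *ᵥ (Xᵀ *ᵥ y))) =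
      y ⬝ᵥ (hatMatrix X *ᵥ y) := by
  rw [mulVec_mulVec (M := Xᵀ * X), mul_nonsing_inv _ ((isUnit_iff_isUnit_det _).1 hX),
    one_mulVec, hatMatrix, ← mulVec_mulVec, ← mulVec_mulVec, dotProduct_mulVec y X,
    ← mulVec_transpose, dotProduct_comm]

lemma posSemidef_hatMatrix [PartialOrder R] [StarRing R] [StarOrderedRing R] [TrivialStar R]
    (W : Matrix m d R) : (hatMatrix W).PosSemidef := by
  simpa [hatMatrix, conjTranspose_eq_transpose_of_trivial, Matrix.mul_assoc] using
    (posSemidef_conjTranspose_mul_self W).inv.conjTranspose_mul_mul_same Wᵀ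

end HatMatrix

lemma sigmaHat_le_one_div_mul_dotProduct_self {n : ℕ} {d : Type*} [Fintype d] [DecidableEq d]
    (Y : Fin n → ℝ) (W : Matrix (Fin n) d ℝ) :
    sigmaHat Y W ≤ 1 / (n : ℝ) * (Y ⬝ᵥ Y) := by
  have h : 0 ≤ Y ⬝ᵥ (hatMatrix W *ᵥ Y) := by
    simpa using (posSemidef_hatMatrix W).dotProduct_mulVec_nonneg Y
  unfold sigmaHat
  gcongr
  exact sub_le_self _ h

lemma sigmaHat_eq_add_of_hatMatrix_eq_add {n : ℕ} {d d₁ : Type*} [Fintype d] [DecidableEq d]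
    [Fintype d₁] [DecidableEq d₁] (Y : Fin n → ℝ) {W : Matrix (Fin n) d ℝ}
    {W₁ : Matrix (Fin n) d₁ ℝ} {P : Matrix (Fin n) (Fin n) ℝ}
    (h : hatMatrix W = hatMatrix W₁ + P) :
    sigmaHat Y W₁ = sigmaHat Y W + 1 / (n : ℝ) * (Y ⬝ᵥ (P *ᵥ Y)) := by
  change _ = 1 / (n : ℝ) * (Y ⬝ᵥ Y - Y ⬝ᵥ (hatMatrix W *ᵥ Y)) + _
  rw [h, add_mulVec, dotProduct_add]
  unfold sigmaHat hatMatrix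
  ring

lemma one_add_inv_mul_le_add_div {s t a : ℝ} (hs : 0 < s) (hst : s ≤ t) (ha : 0 ≤ a) :
    1 + t⁻¹ * a ≤ (s + a) / s := by
  rw [add_div, div_self hs.ne', div_eq_inv_mul]
  gcongr

theorem stmt4_general (n q L : ℕ) (Y : Fin n → ℝ)
    (W₁ : Matrix (Fin n) (Fin q) ℝ) (W₂ : Matrix (Fin n) (Fin L) ℝ)
    (W : Matrix (Fin n) (Fin q ⊕ Fin L) ℝ) (hW : W = fromCols W₁ W₂)
    (hW1 : IsUnit (W₁ᵀ * W₁))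
    (Wt₂ : Matrix (Fin n) (Fin L) ℝ)
    (hWt₂ : Wt₂ = W₂ - W₁ * (W₁ᵀ * W₁)⁻¹ * W₁ᵀ * W₂)
    (hWt₂u : IsUnit (Wt₂ᵀ * Wt₂))
    (hσ : 0 < sigmaHat Y W)
    (Yt : Fin n → ℝ) (hYt : Yt = Y - (W₁ * (W₁ᵀ * W₁)⁻¹ * W₁ᵀ) *ᵥ Y)
    (γ₂ : Fin L → ℝ) (hγ₂ : γ₂ = (Wt₂ᵀ * Wt₂)⁻¹ *ᵥ (Wt₂ᵀ *ᵥ Yt)) :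
    sigmaHat Y W₁ / sigmaHat Y W
      ≥ 1 + ((1 / (n : ℝ)) * (Y ⬝ᵥ Y))⁻¹
            * (γ₂ ⬝ᵥ (((1 / (n : ℝ)) • (Wt₂ᵀ * Wt₂)) *ᵥ γ₂)) := by
  change Wt₂ = W₂ - hatMatrix W₁ * W₂ at hWt₂
  change Yt = Y - hatMatrix W₁ *ᵥ Y at hYt
  have hOrth : W₁ᵀ * Wt₂ = 0 := hWt₂ ▸ transpose_mul_sub_hatMatrix_mul hW1 W₂
  have hSplit : hatMatrix W = hatMatrix W₁ + hatMatrix Wt₂ := by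
    subst hW hWt₂
    exact hatMatrix_fromCols_eq_add_hatMatrix_residual hW1 hWt₂u
  have hFit : γ₂ ⬝ᵥ ((Wt₂ᵀ * Wt₂) *ᵥ γ₂) = Y ⬝ᵥ (hatMatrix Wt₂ *ᵥ Y) := by
    rw [hγ₂, hYt, transpose_mulVec_sub_hatMatrix_mulVec hOrth,
      dotProduct_gram_mulVec_eq_dotProduct_hatMatrix_mulVec hWt₂u]
  have hExplained : 0 ≤ Y ⬝ᵥ (hatMatrix Wt₂ *ᵥ Y) := by
    simpa using (posSemidef_hatMatrix Wt₂).dotProduct_mulVec_nonneg Y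
  rw [ge_iff_le, smul_mulVec, dotProduct_smul, hFit, smul_eq_mul,
    sigmaHat_eq_add_of_hatMatrix_eq_add Y hSplit]
  exact one_add_inv_mul_le_add_div hσ (sigmaHat_le_one_div_mul_dotProduct_self Y W)
    (mul_nonneg (by positivity) hExplained)

/-- Inequality (e507) used in the proof of Theorem 2(i). -/
theorem stmt4 (n q L : ℕ) (Y : Fin n → ℝ)
    (W₁ : Matrix (Fin n) (Fin q) ℝ) (W₂ : Matrix (Fin n) (Fin L) ℝ)
    (W : Matrix (Fin n) (Fin q ⊕ Fin L) ℝ) (hW : W = fromCols W₁ W₂)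
    (hWtW : IsUnit (Wᵀ * W)) (hW1 : IsUnit (W₁ᵀ * W₁))
    (Wt₂ : Matrix (Fin n) (Fin L) ℝ)
    (hWt₂ : Wt₂ = W₂ - W₁ * (W₁ᵀ * W₁)⁻¹ * W₁ᵀ * W₂)
    (hWt₂u : IsUnit (Wt₂ᵀ * Wt₂))
    (hσ : 0 < sigmaHat Y W)
    (Yt : Fin n → ℝ) (hYt : Yt = Y - (W₁ * (W₁ᵀ * W₁)⁻¹ * W₁ᵀ) *ᵥ Y)
    (γ₂ : Fin L → ℝ) (hγ₂ : γ₂ = (Wt₂ᵀ * Wt₂)⁻¹ *ᵥ (Wt₂ᵀ *ᵥ Yt)) :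
    sigmaHat Y W₁ / sigmaHat Y W
      ≥ 1 + ((1 / (n : ℝ)) * (Y ⬝ᵥ Y))⁻¹
            * (γ₂ ⬝ᵥ (((1 / (n : ℝ)) • (Wt₂ᵀ * Wt₂)) *ᵥ γ₂)) :=
  stmt4_general n q L Y W₁ W₂ W hW hW1 Wt₂ hWt₂ hWt₂u hσ Yt hYt γ₂ hγ₂
end

section
/- Let (Ω, 𝓕, P) be a probability space, T : Ω → ℝ measurable, and X : Ω → ℝ^m a bounded measurable random vector with regular conditional distribution κ given T satisfying: there are constants 0 < C₂ ≤ C₃ such that for μ_T-almost every t and every v ∈ ℝ^m, C₂|v|² ≤ ∫ (v·x)² κ(t)(dx) ≤ C₃|v|², where μ_T is the law of T. Let B : ℝ → ℝ^L be a bounded Borel measurable map and suppose there are constants 0 < c₁ ≤ c₂ with c₁|v|² ≤ vᵀ E[B(T)B(T)ᵀ] v ≤ c₂|v|² for every v ∈ ℝ^L. Then for every u ∈ ℝ^{mL}: C₂c₁|u|² ≤ uᵀ E[(X Xᵀ) ⊗ (B(T)B(T)ᵀ)] u ≤ C₃c₂|u|² (the population eigenvalue bounds (e521) on D_{lS} =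 E{n⁻¹W_{S(l)}ᵀW_{S(l)}} in Lemma 1). -/
open MeasureTheory Matrix Kronecker Filter

private lemma bdd_integrable {α : Type*} [MeasurableSpace α] {ν : Measure α}
    [IsFiniteMeasure ν] {f : α → ℝ} (hf : AEStronglyMeasurable f ν) {C : ℝ}
    (hC : ∀ a, |f a| ≤ C) : Integrable f ν :=
  (integrable_const C).mono' hf (Filter.Eventually.of_forall hC)

/-- Population eigenvalue bounds (e521) on
`D = E[(XXᵀ) ⊗ (B(T)B(T)ᵀ)]` in Lemma 1. -/
theorem stmt11 {Ω : Type*} [MeasurableSpace Ω] (P : Measure Ω)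
    [IsProbabilityMeasure P] (m L : ℕ) (T : Ω → ℝ) (hT : Measurable T)
    (X : Ω → (Fin m → ℝ)) (hX : Measurable X)
    (hXb : ∃ CX, ∀ ω j, |X ω j| ≤ CX)
    (κ : ℝ → Measure (Fin m → ℝ)) (hκ : ∀ t, IsProbabilityMeasure (κ t))
    (hdisint : ∀ g : ℝ × (Fin m → ℝ) → ℝ, Measurable g →
      (∃ Cg, ∀ z, |g z| ≤ Cg) →
      ∫ ω, g (T ω, X ω) ∂P = ∫ t, ∫ x, g (t, x) ∂(κ t) ∂(Measure.map T P))
    (C₂ C₃ : ℝ) (hC₂ : 0 < C₂) (hC₂₃ : C₂ ≤ C₃)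
    (hκbound : ∀ᵐ t ∂(Measure.map T P), ∀ v : Fin m → ℝ,
      C₂ * (v ⬝ᵥ v) ≤ ∫ x, (v ⬝ᵥ x) ^ 2 ∂(κ t) ∧
      ∫ x, (v ⬝ᵥ x) ^ 2 ∂(κ t) ≤ C₃ * (v ⬝ᵥ v))
    (B : ℝ → (Fin L → ℝ)) (hB : Measurable B)
    (hBb : ∃ CB, ∀ t k, |B t k| ≤ CB)
    (c₁ c₂ : ℝ) (hc₁ : 0 < c₁) (hc₁₂ : c₁ ≤ c₂)
    (G : Matrix (Fin L) (Fin L) ℝ)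
    (hGdef : ∀ k k', G k k' = ∫ ω, B (T ω) k * B (T ω) k' ∂P)
    (hG : ∀ v : Fin L → ℝ,
      c₁ * (v ⬝ᵥ v) ≤ v ⬝ᵥ (G *ᵥ v) ∧ v ⬝ᵥ (G *ᵥ v) ≤ c₂ * (v ⬝ᵥ v))
    (D : Matrix (Fin m × Fin L) (Fin m × Fin L) ℝ)
    (hDdef : ∀ pq p'q', D pq p'q'
      = ∫ ω, ((vecMulVec (X ω) (X ω)) ⊗ₖ
              (vecMulVec (B (T ω)) (B (T ω)))) pq p'q' ∂P) :
    ∀ u : Fin m × Fin L → ℝ,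
      C₂ * c₁ * (u ⬝ᵥ u) ≤ u ⬝ᵥ (D *ᵥ u) ∧
      u ⬝ᵥ (D *ᵥ u) ≤ C₃ * c₂ * (u ⬝ᵥ u) := by
  obtain ⟨CX₀, hCX₀⟩ := hXb
  obtain ⟨CB₀, hCB₀⟩ := hBb
  set CX : ℝ := |CX₀| with hCXdef
  set CB : ℝ := |CB₀| with hCBdef
  have hCX : ∀ ω j, |X ω j| ≤ CX := fun ω j => (hCX₀ ω j).trans (le_abs_self _)
  have hCB : ∀ t k, |B t k| ≤ CB := fun t k => (hCB₀ t k).trans (le_abs_self _)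
  have hCXn : 0 ≤ CX := abs_nonneg _
  have hCBn : 0 ≤ CB := abs_nonneg _
  have hXm : ∀ j, Measurable fun ω => X ω j := fun j => (measurable_pi_apply j).comp hX
  have hBm : ∀ k, Measurable fun t => B t k := fun k => (measurable_pi_apply k).comp hB
  set μ : Measure ℝ := Measure.map T P with hμdef
  have hμprob : IsProbabilityMeasure μ := by
    rw [hμdef]; exact Measure.isProbabilityMeasure_map hT.aemeasurable
  intro u
  set v : ℝ → Fin m → ℝ := fun t j => ∑ k, u (j, k) * B t k with hvdef
  set s : Ω → ℝ := fun ω => v (T ω) ⬝ᵥ X ω with hsdef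
  have hvm : ∀ j, Measurable fun t => v t j := fun j =>
    Finset.measurable_sum _ fun k _ => (hBm k).const_mul _
  have hsm : Measurable s := by
    show Measurable fun ω => ∑ j, v (T ω) j * X ω j
    exact Finset.measurable_sum _ fun j _ => ((hvm j).comp hT).mul (hXm j)
  have hdotx : ∀ t, Measurable fun x : Fin m → ℝ => v t ⬝ᵥ x := fun t => by
    show Measurable fun x : Fin m → ℝ => ∑ j, v t j * x j
    exact Finset.measurable_sum _ fun j _ => (measurable_pi_apply j).const_mul _
  have hdot : Measurable fun z : ℝ × (Fin m → ℝ) => v z.1 ⬝ᵥ z.2 := by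
    show Measurable fun z : ℝ × (Fin m → ℝ) => ∑ j, v z.1 j * z.2 j
    exact Finset.measurable_sum _ fun j _ =>
      (((hvm j).comp measurable_fst).mul ((measurable_pi_apply j).comp measurable_snd))
  -- bounds on v
  set Vb : Fin m → ℝ := fun j => ∑ k, |u (j, k)| * CB with hVbdef
  have hVbn : ∀ j, 0 ≤ Vb j := fun j =>
    Finset.sum_nonneg fun k _ => mul_nonneg (abs_nonneg _) hCBn
  have hvb : ∀ t j, |v t j| ≤ Vb j := by
    intro t j
    refine (Finset.abs_sum_le_sum_abs _ _).trans (Finset.sum_le_sum fun k _ => ?_)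
    rw [abs_mul]
    exact mul_le_mul_of_nonneg_left (hCB t k) (abs_nonneg _)
  have hvvn : ∀ t, 0 ≤ v t ⬝ᵥ v t := fun t =>
    Finset.sum_nonneg fun j _ => mul_self_nonneg _
  have hvvb : ∀ t, v t ⬝ᵥ v t ≤ ∑ j, Vb j ^ 2 := by
    intro t
    refine Finset.sum_le_sum fun j _ => ?_
    rw [sq, ← abs_mul_abs_self]
    exact mul_le_mul (hvb t j) (hvb t j) (abs_nonneg _) (hVbn j)
  -- bounds on s
  have hsb : ∀ ω, |s ω| ≤ ∑ j, Vb j * CX := by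
    intro ω
    refine (Finset.abs_sum_le_sum_abs _ _).trans (Finset.sum_le_sum fun j _ => ?_)
    rw [abs_mul]
    exact mul_le_mul (hvb (T ω) j) (hCX ω j) (abs_nonneg _) (hVbn j)
  set R₀ : ℝ := (∑ j, Vb j * CX) ^ 2 with hR₀def
  have hR₀n : 0 ≤ R₀ := sq_nonneg _
  have hs2 : ∀ ω, s ω ^ 2 ≤ R₀ := fun ω => by
    rw [← sq_abs]
    exact pow_le_pow_left₀ (abs_nonneg _) (hsb ω) 2
  have hsint : Integrable (fun ω => s ω ^ 2) P :=
    bdd_integrable (hsm.pow_const 2).aestronglyMeasurable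
      (C := R₀) fun ω => by rw [abs_of_nonneg (sq_nonneg _)]; exact hs2 ω
  set Q : ℝ := ∫ ω, s ω ^ 2 ∂P with hQdef
  have hQ0 : 0 ≤ Q := integral_nonneg fun ω => sq_nonneg _
  -- Step A : the quadratic form equals ∫ s².
  have hsw : ∀ ω, s ω = ∑ p : Fin m × Fin L, u p * (X ω p.1 * B (T ω) p.2) := by
    intro ω
    show ∑ j, v (T ω) j * X ω j = _
    rw [Fintype.sum_prod_type]
    refine Finset.sum_congr rfl fun j _ => ?_
    show (∑ k, u (j, k) * B (T ω) k) * X ω j = _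
    rw [Finset.sum_mul]
    exact Finset.sum_congr rfl fun k _ => by ring
  have hkerm : ∀ p q : Fin m × Fin L,
      Measurable fun ω => (X ω p.1 * X ω q.1) * (B (T ω) p.2 * B (T ω) q.2) :=
    fun p q => ((hXm p.1).mul (hXm q.1)).mul (((hBm p.2).comp hT).mul ((hBm q.2).comp hT))
  have hkerint : ∀ p q : Fin m × Fin L,
      Integrable (fun ω => (X ω p.1 * X ω q.1) * (B (T ω) p.2 * B (T ω) q.2)) P := by
    intro p q
    refine bdd_integrable (hkerm p q).aestronglyMeasurable (C := CX * CX * (CB * CB)) fun ω => ?_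
    rw [abs_mul, abs_mul, abs_mul]
    exact mul_le_mul (mul_le_mul (hCX ω p.1) (hCX ω q.1) (abs_nonneg _) hCXn)
      (mul_le_mul (hCB (T ω) p.2) (hCB (T ω) q.2) (abs_nonneg _) hCBn)
      (mul_nonneg (abs_nonneg _) (abs_nonneg _)) (mul_nonneg hCXn hCXn)
  have hfint : ∀ p q : Fin m × Fin L,
      Integrable (fun ω => u p * (((X ω p.1 * X ω q.1) * (B (T ω) p.2 * B (T ω) q.2)) * u q)) P :=
    fun p q => ((hkerint p q).mul_const (u q)).const_mul (u p)
  have h1 : ∀ ω, s ω ^ 2 = ∑ p : Fin m × Fin L, ∑ q : Fin m × Fin L,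
      u p * (((X ω p.1 * X ω q.1) * (B (T ω) p.2 * B (T ω) q.2)) * u q) := by
    intro ω
    rw [sq, hsw ω, Finset.sum_mul_sum]
    exact Finset.sum_congr rfl fun p _ => Finset.sum_congr rfl fun q _ => by ring
  have hDpq : ∀ p q : Fin m × Fin L,
      D p q = ∫ ω, (X ω p.1 * X ω q.1) * (B (T ω) p.2 * B (T ω) q.2) ∂P := by
    intro p q
    rw [hDdef]
    simp only [Matrix.kroneckerMap_apply, Matrix.vecMulVec_apply]
  have hQform : u ⬝ᵥ (D *ᵥ u) = Q := by
    have h2 : Q = ∑ p : Fin m × Fin L, ∑ q : Fin m × Fin L,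
        ∫ ω, u p * (((X ω p.1 * X ω q.1) * (B (T ω) p.2 * B (T ω) q.2)) * u q) ∂P := by
      rw [hQdef]
      calc ∫ ω, s ω ^ 2 ∂P
          = ∫ ω, ∑ p : Fin m × Fin L, ∑ q : Fin m × Fin L,
              u p * (((X ω p.1 * X ω q.1) * (B (T ω) p.2 * B (T ω) q.2)) * u q) ∂P := by
            simp only [h1]
        _ = ∑ p : Fin m × Fin L, ∫ ω, ∑ q : Fin m × Fin L,
              u p * (((X ω p.1 * X ω q.1) * (B (T ω) p.2 * B (T ω) q.2)) * u q) ∂P :=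
            integral_finset_sum _ fun p _ => integrable_finset_sum _ fun q _ => hfint p q
        _ = ∑ p : Fin m × Fin L, ∑ q : Fin m × Fin L,
              ∫ ω, u p * (((X ω p.1 * X ω q.1) * (B (T ω) p.2 * B (T ω) q.2)) * u q) ∂P :=
            Finset.sum_congr rfl fun p _ => integral_finset_sum _ fun q _ => hfint p q
    rw [h2]
    show ∑ p, u p * (D *ᵥ u) p = _
    refine Finset.sum_congr rfl fun p _ => ?_
    show u p * ∑ q, D p q * u q = _
    rw [Finset.mul_sum]
    refine Finset.sum_congr rfl fun q _ => ?_
    rw [hDpq p q, ← integral_mul_const, ← integral_const_mul]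
  -- Step B : disintegration identities
  set F : ℝ → ℝ → ℝ := fun R t => ∫ x, min ((v t ⬝ᵥ x) ^ 2) R ∂(κ t) with hFdef
  have key : ∀ R : ℝ, R₀ ≤ R → Integrable (F R) μ ∧ ∫ t, F R t ∂μ = Q := by
    intro R hR
    have hR0 : (0 : ℝ) ≤ R := hR₀n.trans hR
    have hgmeas : Measurable fun z : ℝ × (Fin m → ℝ) => min ((v z.1 ⬝ᵥ z.2) ^ 2) R + 1 :=
      ((hdot.pow_const 2).min measurable_const).add_const 1
    have hgb : ∀ z : ℝ × (Fin m → ℝ), |min ((v z.1 ⬝ᵥ z.2) ^ 2) R + 1| ≤ R + 1 := by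
      intro z
      have h0 : 0 ≤ min ((v z.1 ⬝ᵥ z.2) ^ 2) R := le_min (sq_nonneg _) hR0
      have h1 : min ((v z.1 ⬝ᵥ z.2) ^ 2) R ≤ R := min_le_right _ _
      rw [abs_of_nonneg (by linarith)]
      linarith
    have hminm : ∀ t, Measurable fun x : Fin m → ℝ => min ((v t ⬝ᵥ x) ^ 2) R :=
      fun t => ((hdotx t).pow_const 2).min measurable_const
    have hminint : ∀ t, Integrable (fun x => min ((v t ⬝ᵥ x) ^ 2) R) (κ t) := by
      intro t
      haveI := hκ t
      refine bdd_integrable (hminm t).aestronglyMeasurable (C := R) fun x => ?_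
      rw [abs_of_nonneg (le_min (sq_nonneg _) hR0)]
      exact min_le_right _ _
    have hinner : ∀ t, ∫ x, (min ((v t ⬝ᵥ x) ^ 2) R + 1) ∂(κ t) = F R t + 1 := by
      intro t
      haveI := hκ t
      rw [integral_add (hminint t) (integrable_const 1), integral_const]
      simp [hFdef]
    have hdis2 : Q + 1 = ∫ t, (F R t + 1) ∂μ := by
      calc Q + 1 = ∫ ω, (s ω ^ 2 + 1) ∂P := by
            rw [integral_add hsint (integrable_const 1), integral_const, hQdef]; simp
        _ = ∫ ω, (min ((v (T ω) ⬝ᵥ X ω) ^ 2) R + 1) ∂P := by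
            refine integral_congr_ae (Filter.Eventually.of_forall fun ω => ?_)
            show s ω ^ 2 + 1 = min ((v (T ω) ⬝ᵥ X ω) ^ 2) R + 1
            rw [show v (T ω) ⬝ᵥ X ω = s ω from rfl, min_eq_left ((hs2 ω).trans hR)]
        _ = ∫ t, ∫ x, (min ((v t ⬝ᵥ x) ^ 2) R + 1) ∂(κ t) ∂μ := by
            rw [hμdef]
            exact hdisint (fun z => min ((v z.1 ⬝ᵥ z.2) ^ 2) R + 1) hgmeas ⟨R + 1, hgb⟩
        _ = ∫ t, (F R t + 1) ∂μ :=
            integral_congr_ae (Filter.Eventually.of_forall fun t => hinner t)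
    have hne : Q + 1 ≠ 0 := by linarith
    have hFint1 : Integrable (fun t => F R t + 1) μ := by
      by_contra hcon
      rw [integral_undef hcon] at hdis2
      exact hne hdis2
    have hFint : Integrable (F R) μ :=
      (hFint1.sub (integrable_const 1)).congr (Filter.Eventually.of_forall fun t => by simp)
    refine ⟨hFint, ?_⟩
    rw [integral_add hFint (integrable_const 1), integral_const] at hdis2
    simp at hdis2
    linarith
  -- a.e. facts
  have hae : ∀ᵐ t ∂μ, Integrable (fun x => (v t ⬝ᵥ x) ^ 2) (κ t) ∧
      C₂ * (v t ⬝ᵥ v t) ≤ ∫ x, (v t ⬝ᵥ x) ^ 2 ∂(κ t) ∧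
      ∫ x, (v t ⬝ᵥ x) ^ 2 ∂(κ t) ≤ C₃ * (v t ⬝ᵥ v t) := by
    filter_upwards [hκbound] with t ht
    obtain ⟨hl, hr⟩ := ht (v t)
    refine ⟨?_, hl, hr⟩
    by_contra hni
    rw [integral_undef hni] at hl
    have hvv0 : v t ⬝ᵥ v t = 0 := by nlinarith [hvvn t]
    have hv0 : v t = 0 := dotProduct_self_eq_zero.mp hvv0
    apply hni
    have : (fun x : Fin m → ℝ => (v t ⬝ᵥ x) ^ 2) = fun _ => (0 : ℝ) := by
      funext x; rw [hv0, zero_dotProduct]; ring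
    rw [this]
    exact integrable_const 0
  -- J and its bounds
  set J : ℝ := ∫ t, v t ⬝ᵥ v t ∂μ with hJdef
  have hvvmeas : Measurable fun t => v t ⬝ᵥ v t := by
    show Measurable fun t => ∑ j, v t j * v t j
    exact Finset.measurable_sum _ fun j _ => (hvm j).mul (hvm j)
  have hvvint : Integrable (fun t => v t ⬝ᵥ v t) μ :=
    bdd_integrable hvvmeas.aestronglyMeasurable (C := ∑ j, Vb j ^ 2) fun t => by
      rw [abs_of_nonneg (hvvn t)]; exact hvvb t
  -- upper bound : Q ≤ C₃ * J
  obtain ⟨hFint0, hF0val⟩ := key R₀ le_rfl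
  have hub : Q ≤ C₃ * J := by
    rw [← hF0val, hJdef, ← integral_const_mul]
    refine integral_mono_ae hFint0 (hvvint.const_mul C₃) ?_
    filter_upwards [hae] with t ht
    obtain ⟨hi, hl, hr⟩ := ht
    have hminint : Integrable (fun x => min ((v t ⬝ᵥ x) ^ 2) R₀) (κ t) := by
      refine hi.mono' (((hdotx t).pow_const 2).min measurable_const).aestronglyMeasurable
        (Filter.Eventually.of_forall fun x => ?_)
      rw [Real.norm_eq_abs, abs_of_nonneg (le_min (sq_nonneg _) hR₀n)]
      exact min_le_left _ _
    calc F R₀ t ≤ ∫ x, (v t ⬝ᵥ x) ^ 2 ∂(κ t) :=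
          integral_mono hminint hi fun x => min_le_left _ _
      _ ≤ C₃ * (v t ⬝ᵥ v t) := hr
  -- lower bound : C₂ * J ≤ Q
  have hlb : C₂ * J ≤ Q := by
    have hkeyn : ∀ n : ℕ, Integrable (F (R₀ + n)) μ ∧ ∫ t, F (R₀ + n) t ∂μ = Q :=
      fun n => key _ (le_add_of_nonneg_right n.cast_nonneg)
    have hcint : Integrable (fun t => C₂ * (v t ⬝ᵥ v t)) μ := hvvint.const_mul C₂
    have hcnn : ∀ t, 0 ≤ C₂ * (v t ⬝ᵥ v t) := fun t => mul_nonneg hC₂.le (hvvn t)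
    have hFnn : ∀ (n : ℕ) t, 0 ≤ F (R₀ + n) t := fun n t =>
      integral_nonneg fun x => le_min (sq_nonneg _) (by positivity)
    have hhb : ∀ (n : ℕ) t, |min (F (R₀ + n) t) (C₂ * (v t ⬝ᵥ v t))| ≤ C₂ * (v t ⬝ᵥ v t) := by
      intro n t
      rw [abs_of_nonneg (le_min (hFnn n t) (hcnn t))]
      exact min_le_right _ _
    have hhasm : ∀ n : ℕ,
        AEStronglyMeasurable (fun t => min (F (R₀ + n) t) (C₂ * (v t ⬝ᵥ v t))) μ := by
      intro n
      exact (hkeyn n).1.aestronglyMeasurable.inf (hvvmeas.const_mul C₂).aestronglyMeasurable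
    have hhint : ∀ n : ℕ, Integrable (fun t => min (F (R₀ + n) t) (C₂ * (v t ⬝ᵥ v t))) μ :=
      fun n => hcint.mono' (hhasm n)
        (Filter.Eventually.of_forall fun t => by rw [Real.norm_eq_abs]; exact hhb n t)
    have hle : ∀ n : ℕ, ∫ t, min (F (R₀ + n) t) (C₂ * (v t ⬝ᵥ v t)) ∂μ ≤ Q := by
      intro n
      rw [← (hkeyn n).2]
      exact integral_mono (hhint n) (hkeyn n).1 fun t => min_le_left _ _
    have htend : Tendsto (fun n : ℕ => ∫ t, min (F (R₀ + n) t) (C₂ * (v t ⬝ᵥ v t)) ∂μ)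
        atTop (nhds (∫ t, C₂ * (v t ⬝ᵥ v t) ∂μ)) := by
      refine tendsto_integral_of_dominated_convergence (bound := fun t => C₂ * (v t ⬝ᵥ v t))
        hhasm hcint (fun n => Filter.Eventually.of_forall fun t => by
          rw [Real.norm_eq_abs]; exact hhb n t) ?_
      filter_upwards [hae] with t ht
      obtain ⟨hi, hl, hr⟩ := ht
      have hFt : Tendsto (fun n : ℕ => F (R₀ + n) t) atTop
          (nhds (∫ x, (v t ⬝ᵥ x) ^ 2 ∂(κ t))) := by
        refine tendsto_integral_of_dominated_convergence (bound := fun x => (v t ⬝ᵥ x) ^ 2)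
          (fun n => (((hdotx t).pow_const 2).min measurable_const).aestronglyMeasurable)
          hi (fun n => Filter.Eventually.of_forall fun x => ?_)
          (Filter.Eventually.of_forall fun x => ?_)
        · rw [Real.norm_eq_abs, abs_of_nonneg (le_min (sq_nonneg _) (by positivity))]
          exact min_le_left _ _
        · refine tendsto_atTop_of_eventually_const (i₀ := ⌈(v t ⬝ᵥ x) ^ 2⌉₊) fun n hn => ?_
          have h1 : (v t ⬝ᵥ x) ^ 2 ≤ (n : ℝ) :=
            le_trans (Nat.le_ceil _) (Nat.cast_le.mpr hn)
          exact min_eq_left (by linarith)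
      have h2 : Tendsto (fun n : ℕ => min (F (R₀ + n) t) (C₂ * (v t ⬝ᵥ v t))) atTop
          (nhds (min (∫ x, (v t ⬝ᵥ x) ^ 2 ∂(κ t)) (C₂ * (v t ⬝ᵥ v t)))) :=
        hFt.min tendsto_const_nhds
      rwa [min_eq_right hl] at h2
    have hfin := le_of_tendsto' htend hle
    rwa [integral_const_mul] at hfin
  -- Step C : bounds on J
  have hBBint : ∀ k k', Integrable (fun ω => B (T ω) k * B (T ω) k') P := by
    intro k k'
    refine bdd_integrable (((hBm k).comp hT).mul ((hBm k').comp hT)).aestronglyMeasurable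
      (C := CB * CB) fun ω => ?_
    rw [abs_mul]
    exact mul_le_mul (hCB _ _) (hCB _ _) (abs_nonneg _) hCBn
  have hvvexp : ∀ ω, v (T ω) ⬝ᵥ v (T ω) = ∑ j, ∑ k, ∑ k',
      (u (j, k) * u (j, k')) * (B (T ω) k * B (T ω) k') := by
    intro ω
    show ∑ j, v (T ω) j * v (T ω) j = _
    refine Finset.sum_congr rfl fun j _ => ?_
    show (∑ k, u (j, k) * B (T ω) k) * (∑ k', u (j, k') * B (T ω) k') = _
    rw [Finset.sum_mul_sum]
    exact Finset.sum_congr rfl fun k _ => Finset.sum_congr rfl fun k' _ => by ring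
  have hJ1 : J = ∑ j, ∑ k, ∑ k', (u (j, k) * u (j, k')) * G k k' := by
    have h0 : J = ∫ ω, v (T ω) ⬝ᵥ v (T ω) ∂P := by
      rw [hJdef, hμdef]
      exact integral_map hT.aemeasurable hvvmeas.aestronglyMeasurable
    rw [h0]
    calc ∫ ω, v (T ω) ⬝ᵥ v (T ω) ∂P
        = ∫ ω, ∑ j, ∑ k, ∑ k', (u (j, k) * u (j, k')) * (B (T ω) k * B (T ω) k') ∂P := by
          simp only [hvvexp]
      _ = ∑ j, ∑ k, ∑ k', ∫ ω, (u (j, k) * u (j, k')) * (B (T ω) k * B (T ω) k') ∂P := by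
          rw [integral_finset_sum _ fun j _ => integrable_finset_sum _ fun k _ =>
            integrable_finset_sum _ fun k' _ => (hBBint k k').const_mul _]
          refine Finset.sum_congr rfl fun j _ => ?_
          rw [integral_finset_sum _ fun k _ =>
            integrable_finset_sum _ fun k' _ => (hBBint k k').const_mul _]
          exact Finset.sum_congr rfl fun k _ =>
            integral_finset_sum _ fun k' _ => (hBBint k k').const_mul _
      _ = ∑ j, ∑ k, ∑ k', (u (j, k) * u (j, k')) * G k k' := by
          refine Finset.sum_congr rfl fun j _ => Finset.sum_congr rfl fun k _ =>
            Finset.sum_congr rfl fun k' _ => ?_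
          rw [integral_const_mul, hGdef]
  have hJ2 : J = ∑ j, (fun k => u (j, k)) ⬝ᵥ (G *ᵥ fun k => u (j, k)) := by
    rw [hJ1]
    refine Finset.sum_congr rfl fun j _ => ?_
    show _ = ∑ k, u (j, k) * ∑ k', G k k' * u (j, k')
    refine Finset.sum_congr rfl fun k _ => ?_
    rw [Finset.mul_sum]
    exact Finset.sum_congr rfl fun k' _ => by ring
  have huu : u ⬝ᵥ u = ∑ j, (fun k => u (j, k)) ⬝ᵥ (fun k => u (j, k)) := by
    show ∑ p : Fin m × Fin L, u p * u p = ∑ j, ∑ k, u (j, k) * u (j, k)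
    rw [Fintype.sum_prod_type]
  have hJl : c₁ * (u ⬝ᵥ u) ≤ J := by
    rw [hJ2, huu, Finset.mul_sum]
    exact Finset.sum_le_sum fun j _ => (hG _).1
  have hJr : J ≤ c₂ * (u ⬝ᵥ u) := by
    rw [hJ2, huu, Finset.mul_sum]
    exact Finset.sum_le_sum fun j _ => (hG _).2
  have hC₃n : 0 ≤ C₃ := (hC₂.trans_le hC₂₃).le
  constructor
  · calc C₂ * c₁ * (u ⬝ᵥ u) = C₂ * (c₁ * (u ⬝ᵥ u)) := by ring
      _ ≤ C₂ * J := mul_le_mul_of_nonneg_left hJl hC₂.le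
      _ ≤ Q := hlb
      _ = u ⬝ᵥ (D *ᵥ u) := hQform.symm
  · calc u ⬝ᵥ (D *ᵥ u) = Q := hQform
      _ ≤ C₃ * J := hub
      _ ≤ C₃ * (c₂ * (u ⬝ᵥ u)) := mul_le_mul_of_nonneg_left hJr hC₃n
      _ = C₃ * c₂ * (u ⬝ᵥ u) := by ring
end

section
/- Let Y ∈ ℝⁿ, W₁ ∈ ℝ^{n×q}, W₂ ∈ ℝ^{n×L}, W = [W₁ W₂], with WᵀW, W₁ᵀW₁ and W̃₂ᵀW̃₂ invertible and σ̂²(W) > 0. Let γ̂₂ = (W̃₂ᵀW̃₂)⁻¹W̃₂ᵀỸ. Let n ≥ 1, p ≥ 1, η ≥ 0, K > 0 and m > 0 be such that n⁻¹YᵀY ≤ K, vᵀ(n⁻¹W̃₂ᵀW̃₂)v ≥ (m/L)|v|² for all v ∈ ℝ^L, and n·log(1 + m|γ̂₂|²/(L·K)) > L(log n + 2η log p). Then n·log σ̂²(W) + L(log n + 2η log p) < n·log σ̂²(W₁); that is, the EBIC strictly decreases when the L extra columns W₂ are added to the design matrix (the deterministic core of Theorem 2(i): the EBIC with stopping parameter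 η does not stop while a sufficiently strong candidate group remains). -/
open Matrix

/-!
Write `RSS(W) = n σ̂²(W)` for the residual sum of squares. Since `[W₁ W₂] (a, γ₂)` reproduces
`Ỹ - W̃₂ γ₂` for a suitable `a`, least squares gives
`RSS(W) ≤ |Ỹ - W̃₂ γ̂₂|² = RSS(W₁) - γ̂₂ᵀ W̃₂ᵀ W̃₂ γ̂₂ ≤ RSS(W₁) - n (m/L) |γ̂₂|²`,
while `RSS(W₁) ≤ |Y|² ≤ n K`. Hence `σ̂²(W₁) / σ̂²(W) ≥ 1 + m |γ̂₂|² / (L K)`, and taking logarithms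
the signal condition beats the EBIC penalty of the extra group.
-/

section LeastSquares

variable {ι d : Type*} [Fintype ι] [Fintype d] [DecidableEq d]

noncomputable def olsCoef (Y : ι → ℝ) (W : Matrix ι d ℝ) : d → ℝ :=
  (Wᵀ * W)⁻¹ *ᵥ (Wᵀ *ᵥ Y)

noncomputable def residualSumSq (Y : ι → ℝ) (W : Matrix ι d ℝ) : ℝ :=
  Y ⬝ᵥ Y - Y ⬝ᵥ ((W * (Wᵀ * W)⁻¹ * Wᵀ) *ᵥ Y)

lemma dotProduct_self_nonneg' (v : ι → ℝ) : 0 ≤ v ⬝ᵥ v := by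
  simpa using dotProduct_self_star_nonneg v

lemma hat_mulVec (Y : ι → ℝ) (W : Matrix ι d ℝ) :
    (W * (Wᵀ * W)⁻¹ * Wᵀ) *ᵥ Y = W *ᵥ olsCoef Y W := by
  rw [olsCoef, mulVec_mulVec, mulVec_mulVec]

variable (Y : ι → ℝ) {W : Matrix ι d ℝ} (hW : IsUnit (Wᵀ * W))
include hW

lemma gram_mulVec_olsCoef : (Wᵀ * W) *ᵥ olsCoef Y W = Wᵀ *ᵥ Y := by
  rw [olsCoef, mulVec_mulVec, mul_nonsing_inv _ ((isUnit_iff_isUnit_det _).mp hW), one_mulVec]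

lemma residual_dotProduct_mulVec (v : d → ℝ) :
    (Y - W *ᵥ olsCoef Y W) ⬝ᵥ (W *ᵥ v) = 0 := by
  have normal_eq : Wᵀ *ᵥ (Y - W *ᵥ olsCoef Y W) = 0 := by
    rw [mulVec_sub, mulVec_mulVec, gram_mulVec_olsCoef Y hW, sub_self]
  rw [dotProduct_mulVec, ← mulVec_transpose, normal_eq, zero_dotProduct]

lemma residualSumSq_eq_dotProduct_residual :
    residualSumSq Y W = (Y - W *ᵥ olsCoef Y W) ⬝ᵥ (Y - W *ᵥ olsCoef Y W) := by
  rw [residualSumSq, hat_mulVec, ← dotProduct_sub, sub_dotProduct Y,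
    dotProduct_comm (W *ᵥ _), residual_dotProduct_mulVec Y hW, sub_zero]

lemma residualSumSq_eq_sub_gram :
    residualSumSq Y W = Y ⬝ᵥ Y - olsCoef Y W ⬝ᵥ ((Wᵀ * W) *ᵥ olsCoef Y W) := by
  rw [residualSumSq, hat_mulVec, gram_mulVec_olsCoef Y hW, dotProduct_mulVec,
    ← mulVec_transpose, dotProduct_comm (Wᵀ *ᵥ Y)]

/-- Pythagoras: the residual `Y - W β̂` is orthogonal to the column space of `W`. -/
lemma residualSumSq_le (b : d → ℝ) :
    residualSumSq Y W ≤ (Y - W *ᵥ b) ⬝ᵥ (Y - W *ᵥ b) := by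
  set r := Y - W *ᵥ olsCoef Y W
  have hsplit : Y - W *ᵥ b = r + W *ᵥ (olsCoef Y W - b) := by
    simp only [r, mulVec_sub]; abel
  rw [residualSumSq_eq_dotProduct_residual Y hW, hsplit, add_dotProduct, dotProduct_add,
    dotProduct_add, residual_dotProduct_mulVec Y hW, dotProduct_comm (W *ᵥ _) r,
    residual_dotProduct_mulVec Y hW]
  linarith [dotProduct_self_nonneg' (W *ᵥ (olsCoef Y W - b))]

lemma residualSumSq_le_dotProduct_self : residualSumSq Y W ≤ Y ⬝ᵥ Y := by
  simpa using residualSumSq_le Y hW 0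

end LeastSquares

section PartialRegression

variable {ι d₁ d₂ : Type*} [Fintype ι] [Fintype d₁] [Fintype d₂] [DecidableEq d₁]
  (Y : ι → ℝ) (W₁ : Matrix ι d₁ ℝ) (W₂ : Matrix ι d₂ ℝ)

lemma exists_fromCols_residual_eq (γ : d₂ → ℝ) :
    ∃ b, Y - fromCols W₁ W₂ *ᵥ b
      = (Y - (W₁ * (W₁ᵀ * W₁)⁻¹ * W₁ᵀ) *ᵥ Y)
        - (W₂ - W₁ * (W₁ᵀ * W₁)⁻¹ * W₁ᵀ * W₂) *ᵥ γ := by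
  refine ⟨Sum.elim (olsCoef (Y - W₂ *ᵥ γ) W₁) γ, ?_⟩
  rw [fromCols_mulVec_sumElim, ← hat_mulVec, mulVec_sub, sub_mulVec,
    ← mulVec_mulVec γ (W₁ * (W₁ᵀ * W₁)⁻¹ * W₁ᵀ) W₂]
  abel

lemma residualSumSq_fromCols_le [DecidableEq d₂]
    (hW : IsUnit ((fromCols W₁ W₂)ᵀ * fromCols W₁ W₂))
    (hW₂ : IsUnit ((W₂ - W₁ * (W₁ᵀ * W₁)⁻¹ * W₁ᵀ * W₂)ᵀ
      * (W₂ - W₁ * (W₁ᵀ * W₁)⁻¹ * W₁ᵀ * W₂))) :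
    residualSumSq Y (fromCols W₁ W₂)
      ≤ residualSumSq (Y - (W₁ * (W₁ᵀ * W₁)⁻¹ * W₁ᵀ) *ᵥ Y)
          (W₂ - W₁ * (W₁ᵀ * W₁)⁻¹ * W₁ᵀ * W₂) := by
  obtain ⟨b, hb⟩ := exists_fromCols_residual_eq Y W₁ W₂
    (olsCoef (Y - (W₁ * (W₁ᵀ * W₁)⁻¹ * W₁ᵀ) *ᵥ Y) (W₂ - W₁ * (W₁ᵀ * W₁)⁻¹ * W₁ᵀ * W₂))
  rw [residualSumSq_eq_dotProduct_residual _ hW₂, ← hb]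
  exact residualSumSq_le Y hW b

end PartialRegression

lemma mul_sigmaHat {n : ℕ} {d : Type*} [Fintype d] [DecidableEq d] (hn : n ≠ 0)
    (Y : Fin n → ℝ) (W : Matrix (Fin n) d ℝ) :
    (n : ℝ) * sigmaHat Y W = residualSumSq Y W := by
  rw [sigmaHat, residualSumSq, ← mul_assoc, mul_one_div_cancel (by exact_mod_cast hn), one_mul]

lemma log_one_add_div_le_log_sub_log {s s₁ δ K : ℝ} (hs : 0 < s) (hδ : 0 ≤ δ)
    (hsδ : s + δ ≤ s₁) (hs₁K : s₁ ≤ K) :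
    Real.log (1 + δ / K) ≤ Real.log s₁ - Real.log s := by
  have hK : 0 < K := by linarith
  rw [← Real.log_div (by linarith) hs.ne']
  apply Real.log_le_log (by positivity)
  calc 1 + δ / K ≤ 1 + δ / s := by gcongr; linarith
    _ = (s + δ) / s := by field_simp
    _ ≤ s₁ / s := by gcongr

theorem stmt14_general (n p q L : ℕ) (hn : 1 ≤ n)
    (η K m : ℝ) (hm : 0 < m)
    (Y : Fin n → ℝ)
    (W₁ : Matrix (Fin n) (Fin q) ℝ) (W₂ : Matrix (Fin n) (Fin L) ℝ)
    (W : Matrix (Fin n) (Fin q ⊕ Fin L) ℝ) (hW : W = fromCols W₁ W₂)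
    (hWtW : IsUnit (Wᵀ * W)) (hW1 : IsUnit (W₁ᵀ * W₁))
    (Wt₂ : Matrix (Fin n) (Fin L) ℝ)
    (hWt₂ : Wt₂ = W₂ - W₁ * (W₁ᵀ * W₁)⁻¹ * W₁ᵀ * W₂)
    (hWt₂u : IsUnit (Wt₂ᵀ * Wt₂))
    (hσ : 0 < sigmaHat Y W)
    (Yt : Fin n → ℝ) (hYt : Yt = Y - (W₁ * (W₁ᵀ * W₁)⁻¹ * W₁ᵀ) *ᵥ Y)
    (γ₂ : Fin L → ℝ) (hγ₂ : γ₂ = (Wt₂ᵀ * Wt₂)⁻¹ *ᵥ (Wt₂ᵀ *ᵥ Yt))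
    (hYK : (1 / (n : ℝ)) * (Y ⬝ᵥ Y) ≤ K)
    (hlow : ∀ v : Fin L → ℝ,
      (m / (L : ℝ)) * (v ⬝ᵥ v)
        ≤ v ⬝ᵥ (((1 / (n : ℝ)) • (Wt₂ᵀ * Wt₂)) *ᵥ v))
    (hsignal : (n : ℝ) * Real.log (1 + m * (γ₂ ⬝ᵥ γ₂) / ((L : ℝ) * K))
      > (L : ℝ) * (Real.log n + 2 * η * Real.log p)) :
    (n : ℝ) * Real.log (sigmaHat Y W)
        + (L : ℝ) * (Real.log n + 2 * η * Real.log p)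
      < (n : ℝ) * Real.log (sigmaHat Y W₁) := by
  have hn0 : (0 : ℝ) < n := by exact_mod_cast hn
  set t := γ₂ ⬝ᵥ ((Wt₂ᵀ * Wt₂) *ᵥ γ₂)
  have hfit : n * sigmaHat Y W + t ≤ n * sigmaHat Y W₁ := by
    have hpartial := residualSumSq_fromCols_le Y W₁ W₂ (hW ▸ hWtW) (hWt₂ ▸ hWt₂u)
    rw [← hW, ← hWt₂, ← hYt, residualSumSq_eq_sub_gram Yt hWt₂u, olsCoef, ← hγ₂] at hpartial
    have hYt_sq : Yt ⬝ᵥ Yt = residualSumSq Y W₁ := by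
      rw [residualSumSq_eq_dotProduct_residual Y hW1, hYt, hat_mulVec]
    rw [mul_sigmaHat (by omega), mul_sigmaHat (by omega), ← hYt_sq]
    linarith
  have hY : n * sigmaHat Y W₁ ≤ n * K := by
    rw [mul_sigmaHat (by omega)]
    have := residualSumSq_le_dotProduct_self Y hW1
    rw [one_div_mul_eq_div, div_le_iff₀ hn0] at hYK
    linarith
  have hsig : n * (m * (γ₂ ⬝ᵥ γ₂) / L) ≤ t := by
    have hlowγ := hlow γ₂
    rw [smul_mulVec, dotProduct_smul, smul_eq_mul, div_mul_eq_mul_div] at hlowγ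
    calc n * (m * (γ₂ ⬝ᵥ γ₂) / L) ≤ n * (1 / n * t) := by gcongr
      _ = t := by field_simp
  have hδ : 0 ≤ m * (γ₂ ⬝ᵥ γ₂) / L :=
    div_nonneg (mul_nonneg hm.le (dotProduct_self_nonneg' γ₂)) L.cast_nonneg
  have hlog := log_one_add_div_le_log_sub_log hσ hδ
    (le_of_mul_le_mul_left (by linarith) hn0) (le_of_mul_le_mul_left hY hn0)
  rw [div_div] at hlog
  have := mul_le_mul_of_nonneg_left hlog hn0.le
  linarith

/-- Deterministic core of Theorem 2(i): the EBIC strictly decreases when a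
sufficiently strong candidate group of `L` columns is added. -/
theorem stmt14 (n p q L : ℕ) (hn : 1 ≤ n) (hp : 1 ≤ p)
    (η K m : ℝ) (hη : 0 ≤ η) (hK : 0 < K) (hm : 0 < m)
    (Y : Fin n → ℝ)
    (W₁ : Matrix (Fin n) (Fin q) ℝ) (W₂ : Matrix (Fin n) (Fin L) ℝ)
    (W : Matrix (Fin n) (Fin q ⊕ Fin L) ℝ) (hW : W = fromCols W₁ W₂)
    (hWtW : IsUnit (Wᵀ * W)) (hW1 : IsUnit (W₁ᵀ * W₁))
    (Wt₂ : Matrix (Fin n) (Fin L) ℝ)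
    (hWt₂ : Wt₂ = W₂ - W₁ * (W₁ᵀ * W₁)⁻¹ * W₁ᵀ * W₂)
    (hWt₂u : IsUnit (Wt₂ᵀ * Wt₂))
    (hσ : 0 < sigmaHat Y W)
    (Yt : Fin n → ℝ) (hYt : Yt = Y - (W₁ * (W₁ᵀ * W₁)⁻¹ * W₁ᵀ) *ᵥ Y)
    (γ₂ : Fin L → ℝ) (hγ₂ : γ₂ = (Wt₂ᵀ * Wt₂)⁻¹ *ᵥ (Wt₂ᵀ *ᵥ Yt))
    (hYK : (1 / (n : ℝ)) * (Y ⬝ᵥ Y) ≤ K)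
    (hlow : ∀ v : Fin L → ℝ,
      (m / (L : ℝ)) * (v ⬝ᵥ v)
        ≤ v ⬝ᵥ (((1 / (n : ℝ)) • (Wt₂ᵀ * Wt₂)) *ᵥ v))
    (hsignal : (n : ℝ) * Real.log (1 + m * (γ₂ ⬝ᵥ γ₂) / ((L : ℝ) * K))
      > (L : ℝ) * (Real.log n + 2 * η * Real.log p)) :
    (n : ℝ) * Real.log (sigmaHat Y W)
        + (L : ℝ) * (Real.log n + 2 * η * Real.log p)
      < (n : ℝ) * Real.log (sigmaHat Y W₁) :=
  stmt14_general n p q L hn η K m hm Y W₁ W₂ W hW hWtW hW1 Wt₂ hWt₂ hWt₂u hσ Yt hYt γ₂ hγ₂ hYK hlow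
    hsignal
end
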